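/- Let q, N be positive integers, A ⊆ ℕ with |A ∩ (j+qℤ)| ≥ N+1 for all 0 ≤ j < q, and let (a_k) be a sequence of complex numbers with generating function of the form p(z)/(1-z^q)^{N+1}, deg p < q(N+1). Then for every k ∈ ℕ there exist complex coefficients (c_{k,h})_{h∈A₀}, for some finite A₀ ⊆ A, depending only on q, N, A (not on the sequence), such that a_k = ∑_{h∈A₀} c_{k,h} a_h for every such sequence. -/

import Mathlib

/-!
The sequences in question are the coefficient sequences of `p / (1 - z^q)^(N+1)` with
`deg p < q(N+1)`, a finite-dimensional space `W`. Multiplying by `(1 - z^q)^(N+1)` shows that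
along each residue class `j + qℕ` the `(N+1)`-st forward difference of such a sequence vanishes,
so `m ↦ a (j + q m)` is a polynomial of degree `≤ N`. If `a` vanishes on `A`, this polynomial
has `N + 1` zeros in every class, so `a = 0`: the evaluations at points of `A` separate `W`.
By duality in the finite-dimensional space `W`, every evaluation `a ↦ a k` is then a finite
linear combination of them.
-/

open Finset
open scoped fwdDiff Polynomial

section Newton

open Polynomial

theorem fwdDiff_iter_eq_zero_of_le {M G : Type*} [AddCommMonoid M] [AddCommGroup G] {h : M}
    {f : M → G} {n m : ℕ} (hf : Δ_[h] ^[n] f = 0) (hnm : n ≤ m) : Δ_[h] ^[m] f = 0 := by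
  obtain ⟨d, rfl⟩ := Nat.exists_eq_add_of_le hnm
  rw [add_comm, Function.iterate_add_apply, hf, ← fwdDiff_aux.coe_fwdDiffₗ_pow]
  exact map_zero _

theorem exists_polynomial_eval_eq_of_fwdDiff_iter_eq_zero {K : Type*} [Field K] [CharZero K]
    {b : ℕ → K} {N : ℕ} (hb : Δ_[1] ^[N + 1] b = 0) :
    ∃ P : K[X], P.natDegree ≤ N ∧ ∀ m : ℕ, P.eval (m : K) = b m := by
  refine ⟨∑ i ∈ range (N + 1), C (Δ_[1] ^[i] b 0 / i.factorial) * descPochhammer K i,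
    ?_, ?_⟩
  · refine natDegree_sum_le_of_forall_le _ _ fun i hi => (natDegree_C_mul_le _ _).trans ?_
    rw [descPochhammer_natDegree]
    exact Nat.lt_succ_iff.mp (mem_range.mp hi)
  intro m
  have newton := shift_eq_sum_fwdDiff_iter 1 b m 0
  simp only [zero_add, smul_eq_mul, mul_one, nsmul_eq_mul] at newton
  -- Beyond `m` the binomial coefficients vanish, beyond `N` the differences do.
  have hsum : ∀ n, m + 1 ≤ n → N + 1 ≤ n →
      ∑ i ∈ range (N + 1), (m.choose i : K) * Δ_[1] ^[i] b 0 =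
        ∑ i ∈ range (m + 1), (m.choose i : K) * Δ_[1] ^[i] b 0 := by
    intro n hmn hNn
    rw [sum_subset (range_subset_range.2 hNn), sum_subset (range_subset_range.2 hmn)]
    · intro i _ hi
      rw [Nat.choose_eq_zero_of_lt (by simpa using hi), Nat.cast_zero, zero_mul]
    · intro i _ hi
      rw [fwdDiff_iter_eq_zero_of_le hb (by simpa using hi), Pi.zero_apply, mul_zero]
  rw [newton, ← hsum (m + N + 1) (by omega) (by omega), eval_finsetSum]
  refine sum_congr rfl fun i _ => ?_
  rw [eval_mul, eval_C, descPochhammer_eval_eq_descFactorial,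
    Nat.descFactorial_eq_factorial_mul_choose]
  have : (i.factorial : K) ≠ 0 := by exact_mod_cast i.factorial_ne_zero
  push_cast
  field_simp

theorem eq_zero_of_fwdDiff_iter_eq_zero_of_eqOn_zero {K : Type*} [Field K] [CharZero K]
    {b : ℕ → K} {N : ℕ} (hb : Δ_[1] ^[N + 1] b = 0) {S : Set ℕ}
    (hS : (N + 1 : ℕ∞) ≤ S.encard) (hbS : Set.EqOn b 0 S) : b = 0 := by
  classical
  obtain ⟨P, hPdeg, hP⟩ := exists_polynomial_eval_eq_of_fwdDiff_iter_eq_zero hb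
  obtain ⟨t, htS, ht⟩ := Set.exists_subset_encard_eq hS
  have htfin : t.Finite := Set.finite_of_encard_eq_coe ht
  have hcard : #htfin.toFinset = N + 1 := by
    rw [htfin.encard_eq_coe_toFinset_card] at ht
    exact_mod_cast ht
  have hP0 : P = 0 := by
    refine P.eq_zero_of_natDegree_lt_card_of_eval_eq_zero' (htfin.toFinset.image Nat.cast) ?_ ?_
    · simp only [mem_image, Set.Finite.mem_toFinset, forall_exists_index, and_imp]
      rintro _ m hm rfl
      rw [hP, hbS (htS hm), Pi.zero_apply]
    · rw [card_image_of_injective _ Nat.cast_injective, hcard]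
      omega
  funext m
  rw [← hP, hP0, eval_zero, Pi.zero_apply]

end Newton

namespace PowerSeries

theorem coeff_mul_one_sub_X_pow_pow {R : Type*} [CommRing R] (f : PowerSeries R)
    (q j n m : ℕ) : coeff (j + q * (m + n)) (f * (1 - X ^ q) ^ n) =
      Δ_[1] ^[n] (fun i => coeff (j + q * i) f) m := by
  induction n generalizing m with
  | zero => simp
  | succ n ih =>
    rw [Function.iterate_succ_apply', fwdDiff, ← ih, ← ih, pow_succ, ← mul_assoc, mul_sub,
      mul_one, map_sub, show j + q * (m + (n + 1)) = j + q * (m + n) + q by ring,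
      show j + q * (m + 1 + n) = j + q * (m + n) + q by ring, coeff_mul_X_pow]

end PowerSeries

theorem Submodule.exists_apply_eq_sum_of_eqOn_zero {K ι : Type*} [Field K]
    (W : Submodule K (ι → K)) [FiniteDimensional K W] {S : Set ι}
    (hS : ∀ f ∈ W, Set.EqOn f 0 S → f = 0) (k : ι) :
    ∃ (S₀ : Finset ι) (c : ι → K), ↑S₀ ⊆ S ∧
      ∀ f ∈ W, f k = ∑ i ∈ S₀, c i * f i := by
  let ev (i : ι) : W →ₗ[K] K := LinearMap.proj i ∘ₗ W.subtype
  have hker : ⨅ i : S, LinearMap.ker (ev i) ≤ LinearMap.ker (ev k) := by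
    intro f hf
    simp only [Submodule.mem_iInf, LinearMap.mem_ker] at hf
    have := hS f f.2 fun i hi => hf ⟨i, hi⟩
    simp [ev, this]
  have hspan := FiniteDimensional.mem_span_of_iInf_ker_le_ker hker
  rw [← Set.image_eq_range, Finsupp.mem_span_image_iff_linearCombination] at hspan
  obtain ⟨c, hcS, hc⟩ := hspan
  refine ⟨c.support, c, hcS, fun f hf => ?_⟩
  have := LinearMap.congr_fun hc ⟨f, hf⟩
  simpa [ev, Finsupp.linearCombination_apply, Finsupp.sum] using this.symm

namespace PowerSeries

variable {K : Type*} [Field K]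

noncomputable def divCoeffsₗ (D : PowerSeries K) (n : ℕ) :
    Polynomial.degreeLT K n →ₗ[K] ℕ → K :=
  LinearMap.pi fun h => coeff h ∘ₗ LinearMap.mulRight K D⁻¹ ∘ₗ
    (Polynomial.coeToPowerSeries.algHom K).toLinearMap ∘ₗ (Polynomial.degreeLT K n).subtype

theorem mem_range_divCoeffsₗ_iff {D : PowerSeries K} (hD : constantCoeff D ≠ 0) {n : ℕ}
    {a : ℕ → K} :
    a ∈ LinearMap.range (divCoeffsₗ D n) ↔
      ∃ p : K[X], p.degree < n ∧ mk a * D = (p : PowerSeries K) := by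
  constructor
  · rintro ⟨⟨p, hp⟩, rfl⟩
    refine ⟨p, Polynomial.mem_degreeLT.1 hp, ?_⟩
    have : mk (divCoeffsₗ D n ⟨p, hp⟩) = p * D⁻¹ := by
      ext h
      simp [divCoeffsₗ]
    rw [this, mul_assoc, PowerSeries.inv_mul_cancel D hD, mul_one]
  · rintro ⟨p, hp, hap⟩
    refine ⟨⟨p, Polynomial.mem_degreeLT.2 hp⟩, funext fun h => ?_⟩
    simp [divCoeffsₗ, ← hap, mul_assoc, PowerSeries.mul_inv_cancel D hD]

theorem eq_zero_of_mk_mul_one_sub_X_pow_pow_eq [CharZero K] {q N : ℕ} (hq : 0 < q) {A : Set ℕ}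
    (hA : ∀ j < q, (N + 1 : ℕ∞) ≤ {k | k ∈ A ∧ k % q = j}.encard) {a : ℕ → K}
    {p : K[X]} (hp : p.degree < (q * (N + 1) : ℕ))
    (hap : mk a * (1 - X ^ q) ^ (N + 1) = (p : PowerSeries K)) (haA : Set.EqOn a 0 A) :
    a = 0 := by
  funext n
  set j := n % q
  have hb : Δ_[1] ^[N + 1] (fun i => a (j + q * i)) = 0 := by
    funext m
    have hcoeff := coeff_mul_one_sub_X_pow_pow (mk a) q j (N + 1) m
    simp only [coeff_mk] at hcoeff
    rw [← hcoeff, hap, Polynomial.coeff_coe, Pi.zero_apply]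
    refine Polynomial.coeff_eq_zero_of_degree_lt (hp.trans_le ?_)
    exact_mod_cast (Nat.mul_le_mul_left q (Nat.le_add_left _ _)).trans (Nat.le_add_left _ _)
  have hres : {k | k ∈ A ∧ k % q = j} = (fun i => j + q * i) '' {i | j + q * i ∈ A} := by
    ext k
    constructor
    · rintro ⟨hkA, hkj⟩
      refine ⟨k / q, ?_, ?_⟩ <;> simp only [Set.mem_ofPred_eq, ← hkj, Nat.mod_add_div, hkA]
    · rintro ⟨i, hi, rfl⟩
      exact ⟨hi, by simp [j]⟩
  have hS : (N + 1 : ℕ∞) ≤ {i | j + q * i ∈ A}.encard := by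
    have hinj : Function.Injective fun i => j + q * i := fun _ _ h => by
      simpa [hq.ne'] using h
    rw [← hinj.encard_image, ← hres]
    exact hA j (Nat.mod_lt n hq)
  have := congr_fun (eq_zero_of_fwdDiff_iter_eq_zero_of_eqOn_zero hb hS fun _ hi => haA hi) (n / q)
  simpa [j, Nat.mod_add_div] using this

end PowerSeries

theorem stmt14_general (q N : ℕ) (hq : 0 < q) (A : Set ℕ)
    (hA : ∀ j < q, (N + 1 : ℕ∞) ≤ {k | k ∈ A ∧ k % q = j}.encard) :
    ∀ k : ℕ, ∃ (A₀ : Finset ℕ) (c : ℕ → ℂ), ↑A₀ ⊆ A ∧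
      ∀ (a : ℕ → ℂ) (p : Polynomial ℂ), p.degree < (q * (N + 1) : ℕ) →
        PowerSeries.mk a * (1 - PowerSeries.X ^ q) ^ (N + 1) = (p : PowerSeries ℂ) →
        a k = ∑ h ∈ A₀, c h * a h := by
  intro k
  set D : PowerSeries ℂ := (1 - PowerSeries.X ^ q) ^ (N + 1)
  have hD : PowerSeries.constantCoeff D ≠ 0 := by simp [D, hq.ne']
  have hW : ∀ a ∈ LinearMap.range (PowerSeries.divCoeffsₗ D (q * (N + 1))),
      Set.EqOn a 0 A → a = 0 := by
    intro a ha haA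
    obtain ⟨p, hp, hap⟩ := (PowerSeries.mem_range_divCoeffsₗ_iff hD).1 ha
    exact PowerSeries.eq_zero_of_mk_mul_one_sub_X_pow_pow_eq hq hA hp hap haA
  obtain ⟨A₀, c, hA₀A, hc⟩ := Submodule.exists_apply_eq_sum_of_eqOn_zero _ hW k
  exact ⟨A₀, c, hA₀A, fun a p hp hap =>
    hc a ((PowerSeries.mem_range_divCoeffsₗ_iff hD).2 ⟨p, hp, hap⟩)⟩

theorem stmt14 (q N : ℕ) (hq : 0 < q) (hN : 0 < N) (A : Set ℕ)
    (hA : ∀ j < q, (N + 1 : ℕ∞) ≤ {k | k ∈ A ∧ k % q = j}.encard) :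
    ∀ k : ℕ, ∃ (A₀ : Finset ℕ) (c : ℕ → ℂ), ↑A₀ ⊆ A ∧
      ∀ (a : ℕ → ℂ) (p : Polynomial ℂ), p.degree < (q * (N + 1) : ℕ) →
        PowerSeries.mk a * (1 - PowerSeries.X ^ q) ^ (N + 1) = (p : PowerSeries ℂ) →
        a k = ∑ h ∈ A₀, c h * a h :=
  stmt14_general q N hq A hA
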